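/- Let G be a simple graph on a nonempty finite vertex set V, and let F and H be flats of G with H ⊆ F. Then the sum, over all ordered set partitions (S_1,…,S_k) of V into nonempty blocks satisfying ⋃_{i=1}^k F|_{S_i} = H, of (-1)^k, equals (-1)^{c(H)} · o(H,F). Here F|_{S_i} = {edges of F with both endpoints in S_i}; c(H) is the number of connected components of the spanning subgraph (V,H); and o(H,F) is the number of acyclic orientations of the contraction graph (V,F)/H, the simple graph whose vertices are the connected components of (V,H), with two distinct components B and C adjacent exactly when some edge of F joins a vertex of B to a vertex of C. -/

import Mathlib

namespace GraphSpecies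

variable {V : Type*}

def IsOrientationOn (G : SimpleGraph V) (S : Set V) (O : V → V → Prop) : Prop :=
  (∀ u v, O u v → u ∈ S ∧ v ∈ S ∧ G.Adj u v) ∧
  (∀ u v, u ∈ S → v ∈ S → G.Adj u v → O u v ∨ O v u) ∧
  (∀ u v, ¬ (O u v ∧ O v u))

def IsAcyclicOrientationOn (G : SimpleGraph V) (S : Set V) (O : V → V → Prop) : Prop :=
  IsOrientationOn G S O ∧ Irreflexive (Relation.TransGen O)

def restrictO (O : V → V → Prop) (A : Set V) : V → V → Prop :=
  fun u v => O u v ∧ u ∈ A ∧ v ∈ A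

def prodO (G : SimpleGraph V) (S T : Set V) (O P : V → V → Prop) : V → V → Prop :=
  fun u v => O u v ∨ P u v ∨ (u ∈ S ∧ v ∈ T ∧ G.Adj u v)

def flipO (O : V → V → Prop) : V → V → Prop := fun u v => O v u

noncomputable def eCount (O : V → V → Prop) (A B : Set V) : ℕ :=
  {p : V × V | O p.1 p.2 ∧ p.1 ∈ A ∧ p.2 ∈ B}.ncard

noncomputable def eCross (G : SimpleGraph V) (A B : Set V) : ℕ :=
  {p : V × V | G.Adj p.1 p.2 ∧ p.1 ∈ A ∧ p.2 ∈ B}.ncard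

def IsComposition [DecidableEq V] (X : Finset V) (C : List (Finset V)) : Prop :=
  (∀ B ∈ C, B.Nonempty) ∧ C.Pairwise Disjoint ∧ C.foldr (· ∪ ·) ∅ = X

def earlier (C : List (Finset V)) (u v : V) : Prop :=
  ∃ i j : Fin C.length, i < j ∧ u ∈ C.get i ∧ v ∈ C.get j

def sameBlock (C : List (Finset V)) (u v : V) : Prop :=
  ∃ i : Fin C.length, u ∈ C.get i ∧ v ∈ C.get i

def restrictC [DecidableEq V] (C : List (Finset V)) (S : Finset V) : List (Finset V) :=
  (C.map (· ∩ S)).filter fun B => B.Nonempty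

def IsStableComposition [DecidableEq V] (G : SimpleGraph V) (S : Finset V)
    (C : List (Finset V)) : Prop :=
  IsComposition S C ∧ ∀ B ∈ C, ∀ u ∈ B, ∀ v ∈ B, ¬ G.Adj u v

def edgeRestrict (F : Set (Sym2 V)) (S : Set V) : Set (Sym2 V) :=
  {e | e ∈ F ∧ ∀ v ∈ e, v ∈ S}

def IsFlatOn (G : SimpleGraph V) (S : Set V) (F : Set (Sym2 V)) : Prop :=
  F ⊆ G.edgeSet ∧ (∀ e ∈ F, ∀ v ∈ e, v ∈ S) ∧
  ∀ u v, u ∈ S → v ∈ S → G.Adj u v →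
    (SimpleGraph.fromEdgeSet F).Reachable u v → s(u, v) ∈ F

def IsLinList (ℓ : List V) : Prop := ℓ.Nodup ∧ ∀ v : V, v ∈ ℓ

def after [DecidableEq V] (ℓ : List V) (u v : V) : Prop :=
  ℓ.idxOf v < ℓ.idxOf u

def linOfComp [DecidableEq V] (ℓ : List V) (C : List (Finset V)) : List V :=
  (C.map fun B => ℓ.filter fun v => v ∈ B).flatten


def contractionGraph (H F : Set (Sym2 V)) :
    SimpleGraph (SimpleGraph.fromEdgeSet H).ConnectedComponent where
  Adj B C := B ≠ C ∧ ∃ u v : V, s(u, v) ∈ F ∧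
      (SimpleGraph.fromEdgeSet H).connectedComponentMk u = B ∧
      (SimpleGraph.fromEdgeSet H).connectedComponentMk v = C
  symm := ⟨by
    rintro B C ⟨hne, u, v, he, hu, hv⟩
    exact ⟨hne.symm, v, u, by rw [Sym2.eq_swap]; exact he, hv, hu⟩⟩
  loopless := ⟨by rintro B ⟨hne, -⟩; exact hne rfl⟩

/-!
A composition `C` of `V` with `⋃ F|_B = H` has blocks that are unions of connected components
of `(V, H)`, with no edge of `F` between two different components of the same block. Taking
images in the component set therefore matches these compositions, length for length, with the
compositions of the vertex set of `(V, F)/H` into independent blocks. Such a composition orients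
every edge of the contraction from its earlier to its later block, acyclically, and the
compositions inducing a given acyclic orientation `O` are exactly those compatible with `O`.
Their alternating sum is `(-1) ^ c(H)`: the first block is a nonempty set of sources of `O`, and
`∑_{∅ ≠ S ⊆ M} (-1) ^ |S| = -1`. Summing over `O` gives the theorem.
-/

section Composition
variable {W : Type*} {C : List (Finset W)}

lemma eq_of_mem_get_of_pairwise_disjoint (hC : C.Pairwise Disjoint)
    {a : W} {i j : Fin C.length} (hi : a ∈ C.get i) (hj : a ∈ C.get j) : i = j := by
  by_contra hne
  rcases lt_or_gt_of_ne hne with h | h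
  · exact Finset.disjoint_left.mp (List.pairwise_iff_get.mp hC i j h) hi hj
  · exact Finset.disjoint_left.mp (List.pairwise_iff_get.mp hC j i h) hj hi

lemma eq_of_mem_of_pairwise_disjoint (hC : C.Pairwise Disjoint) {B B' : Finset W} (hB : B ∈ C)
    (hB' : B' ∈ C) {a : W} (ha : a ∈ B) (ha' : a ∈ B') : B = B' := by
  obtain ⟨i, rfl⟩ := List.mem_iff_get.mp hB
  obtain ⟨j, rfl⟩ := List.mem_iff_get.mp hB'
  rw [eq_of_mem_get_of_pairwise_disjoint hC ha ha']

lemma earlier_cons {S : Finset W} {u v : W} :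
    earlier (S :: C) u v ↔ (u ∈ S ∧ ∃ B ∈ C, v ∈ B) ∨ earlier C u v := by
  simp [earlier, Fin.exists_fin_succ, List.mem_iff_get]

lemma earlier_trans (hC : C.Pairwise Disjoint) {u v w : W} (huv : earlier C u v)
    (hvw : earlier C v w) : earlier C u w := by
  obtain ⟨i, j, hij, hu, hv⟩ := huv
  obtain ⟨j', k, hjk, hv', hw⟩ := hvw
  obtain rfl := eq_of_mem_get_of_pairwise_disjoint hC hv hv'
  exact ⟨i, k, hij.trans hjk, hu, hw⟩

lemma not_earlier_of_mem_get (hC : C.Pairwise Disjoint) {u v : W} {k : Fin C.length}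
    (hu : u ∈ C.get k) (hv : v ∈ C.get k) : ¬ earlier C u v := by
  rintro ⟨i, j, hij, hui, hvj⟩
  obtain rfl := eq_of_mem_get_of_pairwise_disjoint hC hu hui
  obtain rfl := eq_of_mem_get_of_pairwise_disjoint hC hv hvj
  exact lt_irrefl _ hij

lemma earlier_asymm (hC : C.Pairwise Disjoint) {u v : W} (huv : earlier C u v) :
    ¬ earlier C v u := fun hvu =>
  let ⟨_, _, _, hu, _⟩ := huv
  not_earlier_of_mem_get hC hu hu (earlier_trans hC huv hvu)

lemma pairwiseDisjoint_image_cons (I : Set (Finset W)) (T : Finset W → Set (List (Finset W))) :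
    I.PairwiseDisjoint fun S => (S :: ·) '' T S := by
  intro S _ S' _ hne
  refine Set.disjoint_left.mpr ?_
  rintro _ ⟨C, -, rfl⟩ ⟨C', -, h⟩
  exact hne (List.cons.inj h).1.symm

variable [DecidableEq W]

lemma mem_foldr_union {a : W} :
    a ∈ C.foldr (· ∪ ·) ∅ ↔ ∃ B ∈ C, a ∈ B := by
  induction C with
  | nil => simp
  | cons B C ih => simp [ih]

namespace IsComposition
variable {X : Finset W}

lemma mem_iff (hC : IsComposition X C) {a : W} : a ∈ X ↔ ∃ B ∈ C, a ∈ B := by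
  rw [← hC.2.2, mem_foldr_union]

lemma exists_mem_get (hC : IsComposition X C) {a : W} (ha : a ∈ X) :
    ∃ i : Fin C.length, a ∈ C.get i := by
  obtain ⟨B, hB, haB⟩ := hC.mem_iff.mp ha
  obtain ⟨i, rfl⟩ := List.mem_iff_get.mp hB
  exact ⟨i, haB⟩

lemma mem_of_earlier (hC : IsComposition X C) {u v : W} (h : earlier C u v) :
    u ∈ X ∧ v ∈ X := by
  obtain ⟨i, j, -, hu, hv⟩ := h
  exact ⟨hC.mem_iff.mpr ⟨_, C.get_mem i, hu⟩, hC.mem_iff.mpr ⟨_, C.get_mem j, hv⟩⟩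

end IsComposition

lemma isComposition_nil_iff {X : Finset W} : IsComposition X [] ↔ X = ∅ := by
  simp [IsComposition, eq_comm]

lemma isComposition_cons_iff {X S : Finset W} :
    IsComposition X (S :: C) ↔ S.Nonempty ∧ S ⊆ X ∧ IsComposition (X \ S) C := by
  simp only [IsComposition, List.mem_cons, forall_eq_or_imp, List.pairwise_cons, List.foldr_cons]
  constructor
  · rintro ⟨⟨hS, hne⟩, ⟨hdisj, hpd⟩, rfl⟩
    have : Disjoint S (C.foldr (· ∪ ·) ∅) := Finset.disjoint_left.mpr fun {a} ha haU => by
      obtain ⟨B, hB, haB⟩ := mem_foldr_union.mp haU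
      exact Finset.disjoint_left.mp (hdisj B hB) ha haB
    exact ⟨hS, Finset.subset_union_left, hne, hpd,
      by rw [Finset.union_sdiff_left, Finset.sdiff_eq_self_of_disjoint this.symm]⟩
  · rintro ⟨hS, hSX, hne, hpd, hU⟩
    refine ⟨⟨hS, hne⟩, ⟨fun B hB => ?_, hpd⟩,
      by rw [hU, Finset.union_sdiff_of_subset hSX]⟩
    have hBX : B ⊆ X \ S := fun a ha => hU ▸ mem_foldr_union.mpr ⟨B, hB, ha⟩
    exact Finset.disjoint_of_subset_right hBX Finset.disjoint_sdiff

lemma IsComposition.length_le_card {X : Finset W} (hC : IsComposition X C) :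
    C.length ≤ X.card := by
  induction C generalizing X with
  | nil => simp
  | cons S C ih =>
    obtain ⟨hS, hSX, hC⟩ := isComposition_cons_iff.mp hC
    have := ih hC
    rw [Finset.card_sdiff_of_subset hSX] at this
    have := Finset.card_le_card hSX
    have := hS.card_pos
    simp only [List.length_cons]
    omega

lemma finite_setOf_isComposition [Fintype W] (X : Finset W) :
    {C : List (Finset W) | IsComposition X C}.Finite :=
  (List.finite_length_le (Finset W) X.card).subset fun _ hC => hC.length_le_card

end Composition

section Compatible
variable {W : Type*} [DecidableEq W]

def compatibleComps (R : W → W → Prop) (X : Finset W) : Set (List (Finset W)) :=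
  {C | IsComposition X C ∧ ∀ u ∈ X, ∀ v ∈ X, R u v → earlier C u v}

lemma compatibleComps_empty (R : W → W → Prop) : compatibleComps R ∅ = {[]} := by
  ext C
  cases C with
  | nil => simp [compatibleComps, isComposition_nil_iff]
  | cons S C =>
    simp only [compatibleComps, isComposition_cons_iff, Set.mem_ofPred_eq,
      Set.mem_singleton_iff, reduceCtorEq, iff_false]
    rintro ⟨⟨hS, hSX, -⟩, -⟩
    exact (hS.mono hSX).ne_empty rfl

variable {R : W → W → Prop}

lemma cons_mem_compatibleComps_iff {X S : Finset W} {C : List (Finset W)} :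
    S :: C ∈ compatibleComps R X ↔
      S.Nonempty ∧ S ⊆ X ∧ (∀ v ∈ S, ∀ u ∈ X, ¬ R u v) ∧
        C ∈ compatibleComps R (X \ S) := by
  simp only [compatibleComps, Set.mem_ofPred_eq, isComposition_cons_iff, earlier_cons]
  constructor
  · rintro ⟨⟨hS, hSX, hC⟩, hR⟩
    have hvS : ∀ u ∈ X, ∀ v ∈ X, R u v → v ∉ S := by
      intro u hu v hv huv hvS
      rcases hR u hu v hv huv with ⟨-, hvC⟩ | hCuv
      · exact (Finset.mem_sdiff.mp (hC.mem_iff.mpr hvC)).2 hvS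
      · exact (Finset.mem_sdiff.mp (hC.mem_of_earlier hCuv).2).2 hvS
    refine ⟨hS, hSX, fun v hv u hu huv => hvS u hu v (hSX hv) huv hv, hC, ?_⟩
    intro u hu v hv huv
    rw [Finset.mem_sdiff] at hu hv
    exact (hR u hu.1 v hv.1 huv).resolve_left fun h => hu.2 h.1
  · rintro ⟨hS, hSX, hmin, hC, hR⟩
    refine ⟨⟨hS, hSX, hC⟩, fun u hu v hv huv => ?_⟩
    have hvS : v ∉ S := fun hvS => hmin v hvS u hu huv
    by_cases huS : u ∈ S
    · exact Or.inl ⟨huS, hC.mem_iff.mp (Finset.mem_sdiff.mpr ⟨hv, hvS⟩)⟩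
    · exact Or.inr
        (hR u (Finset.mem_sdiff.mpr ⟨hu, huS⟩) v (Finset.mem_sdiff.mpr ⟨hv, hvS⟩) huv)

/-- `M` is the set of `R`-minimal elements of `X`; the possible first blocks are its nonempty
subsets. -/
lemma exists_compatibleComps_eq_biUnion (hR : WellFounded R) {X : Finset W} (hX : X.Nonempty) :
    ∃ M ⊆ X, M.Nonempty ∧ compatibleComps R X =
      ⋃ S ∈ ((M.powerset.erase ∅ : Finset (Finset W)) : Set (Finset W)),
        (S :: ·) '' compatibleComps R (X \ S) := by
  classical
  refine ⟨X.filter fun v => ∀ u ∈ X, ¬ R u v, Finset.filter_subset _ _, ?_, ?_⟩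
  · obtain ⟨v, hv, hmin⟩ := hR.has_min X hX
    exact ⟨v, Finset.mem_filter.mpr ⟨hv, fun u hu => hmin u hu⟩⟩
  ext C
  simp only [Set.mem_iUnion, Set.mem_image, Finset.coe_erase, Finset.coe_powerset,
    Set.mem_sdiff, Set.mem_preimage, Set.mem_powerset_iff, Finset.coe_subset,
    Set.mem_singleton_iff, exists_prop]
  cases C with
  | nil =>
    simp only [compatibleComps, Set.mem_ofPred_eq, isComposition_nil_iff, reduceCtorEq, and_false,
      exists_false, iff_false, not_and]
    exact fun h => absurd h hX.ne_empty
  | cons S C =>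
    simp only [List.cons.injEq, cons_mem_compatibleComps_iff, Finset.subset_iff,
      Finset.mem_filter, Finset.nonempty_iff_ne_empty]
    constructor
    · rintro ⟨hS, hSX, hmin, hC⟩
      exact ⟨S, ⟨fun v hv => ⟨hSX hv, hmin v hv⟩, hS⟩, C, hC, rfl, rfl⟩
    · rintro ⟨S, ⟨hSM, hS⟩, C, hC, rfl, rfl⟩
      exact ⟨hS, fun v hv => (hSM hv).1, fun v hv => (hSM hv).2, hC⟩

lemma sum_powerset_erase_empty_neg_one_pow {M : Finset W} (hM : M.Nonempty) :
    ∑ S ∈ M.powerset.erase ∅, (-1 : ℤ) ^ S.card = -1 := by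
  rw [Finset.sum_erase_eq_sub (Finset.empty_mem_powerset M),
    Finset.sum_powerset_neg_one_pow_card_of_nonempty hM]
  simp

lemma neg_one_pow_card_sdiff {X S : Finset W} (hSX : S ⊆ X) :
    (-1 : ℤ) ^ (X \ S).card = (-1) ^ X.card * (-1) ^ S.card := by
  rw [← Finset.card_sdiff_add_card_eq_card hSX, pow_add, mul_assoc, ← pow_add,
    Even.neg_one_pow ⟨_, rfl⟩, mul_one]

lemma finite_compatibleComps [Fintype W] (R : W → W → Prop) (X : Finset W) :
    (compatibleComps R X).Finite :=
  (finite_setOf_isComposition X).subset fun _ h => h.1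

theorem finsum_compatibleComps [Fintype W] (hR : WellFounded R) (X : Finset W) :
    ∑ᶠ C ∈ compatibleComps R X, (-1 : ℤ) ^ C.length = (-1) ^ X.card := by
  induction X using Finset.strongInduction with
  | _ X ih =>
  rcases X.eq_empty_or_nonempty with rfl | hX
  · simp [compatibleComps_empty]
  obtain ⟨M, hMX, hM, hsplit⟩ := exists_compatibleComps_eq_biUnion hR hX
  have hblock : ∀ S ∈ M.powerset.erase ∅,
      ∑ᶠ C ∈ compatibleComps R (X \ S), (-1 : ℤ) ^ (S :: C).length
        = -((-1) ^ X.card * (-1) ^ S.card) := by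
    intro S hS
    rw [Finset.mem_erase, Finset.mem_powerset, ← Finset.nonempty_iff_ne_empty] at hS
    have hSX : S ⊆ X := hS.2.trans hMX
    simp only [List.length_cons, pow_succ, mul_neg_one]
    rw [finsum_mem_neg_distrib _ (finite_compatibleComps R _),
      ih _ (Finset.sdiff_ssubset hSX hS.1), neg_one_pow_card_sdiff hSX]
  rw [hsplit, finsum_mem_biUnion (pairwiseDisjoint_image_cons _ _) (Finset.finite_toSet _)
    fun S _ => (finite_compatibleComps R _).image _, finsum_mem_coe_finset]
  calc ∑ S ∈ M.powerset.erase ∅,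
        ∑ᶠ C ∈ (S :: ·) '' compatibleComps R (X \ S), (-1 : ℤ) ^ C.length
      = ∑ S ∈ M.powerset.erase ∅, -((-1) ^ X.card * (-1) ^ S.card) := by
        refine Finset.sum_congr rfl fun S hS => ?_
        rw [finsum_mem_image List.cons_injective.injOn, hblock S hS]
    _ = (-1) ^ X.card := by
        rw [Finset.sum_neg_distrib, ← Finset.mul_sum, sum_powerset_erase_empty_neg_one_pow hM]
        ring

end Compatible

lemma wellFounded_of_irrefl_transGen {W : Type*} [Finite W] {R : W → W → Prop}
    (h : ∀ a, ¬ Relation.TransGen R a a) : WellFounded R :=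
  haveI : Std.Irrefl (Relation.TransGen R) := ⟨h⟩
  Subrelation.wf Relation.TransGen.single (Finite.wellFounded_of_trans_of_irrefl _)

section Orientation
variable {W : Type*} [DecidableEq W] [Fintype W] {Q : SimpleGraph W}

def compOrientation (Q : SimpleGraph W) (C : List (Finset W)) : W → W → Prop :=
  fun u v => Q.Adj u v ∧ earlier C u v

lemma isAcyclicOrientationOn_compOrientation {C : List (Finset W)}
    (hC : IsStableComposition Q Finset.univ C) :
    IsAcyclicOrientationOn Q Set.univ (compOrientation Q C) := by
  obtain ⟨hcomp, hstable⟩ := hC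
  have hpd := hcomp.2.1
  refine ⟨⟨fun u v h => ⟨trivial, trivial, h.1⟩, fun u v _ _ hadj => ?_,
    fun u v ⟨huv, hvu⟩ => earlier_asymm hpd huv.2 hvu.2⟩, fun u hu => ?_⟩
  · obtain ⟨i, hi⟩ := hcomp.exists_mem_get (Finset.mem_univ u)
    obtain ⟨j, hj⟩ := hcomp.exists_mem_get (Finset.mem_univ v)
    rcases lt_trichotomy i j with h | rfl | h
    · exact Or.inl ⟨hadj, i, j, h, hi, hj⟩
    · exact absurd hadj (hstable _ (C.get_mem i) u hi v hj)
    · exact Or.inr ⟨hadj.symm, j, i, h, hj, hi⟩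
  · have hearlier : ∀ {u v}, Relation.TransGen (compOrientation Q C) u v → earlier C u v := by
      intro u v h
      induction h with
      | single h => exact h.2
      | tail _ h ih => exact earlier_trans hpd ih h.2
    obtain ⟨i, -, -, hi, -⟩ := hearlier hu
    exact not_earlier_of_mem_get hpd hi hi (hearlier hu)

variable {O : W → W → Prop}

lemma isStableComposition_of_mem_compatibleComps (hO : IsOrientationOn Q Set.univ O)
    {C : List (Finset W)} (hC : C ∈ compatibleComps O Finset.univ) :
    IsStableComposition Q Finset.univ C := by
  refine ⟨hC.1, fun B hB u hu v hv hadj => ?_⟩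
  obtain ⟨k, rfl⟩ := List.mem_iff_get.mp hB
  have hpd := hC.1.2.1
  rcases hO.2.1 u v trivial trivial hadj with h | h
  · exact not_earlier_of_mem_get hpd hu hv (hC.2 u (Finset.mem_univ u) v (Finset.mem_univ v) h)
  · exact not_earlier_of_mem_get hpd hv hu (hC.2 v (Finset.mem_univ v) u (Finset.mem_univ u) h)

lemma compOrientation_eq (hO : IsOrientationOn Q Set.univ O) {C : List (Finset W)}
    (hC : C ∈ compatibleComps O Finset.univ) : compOrientation Q C = O := by
  have hOC : ∀ {u v}, O u v → earlier C u v := fun h =>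
    hC.2 _ (Finset.mem_univ _) _ (Finset.mem_univ _) h
  funext u v
  refine propext ⟨fun ⟨hadj, huv⟩ => ?_, fun h => ⟨(hO.1 u v h).2.2, hOC h⟩⟩
  exact (hO.2.1 u v trivial trivial hadj).resolve_right
    fun hvu => earlier_asymm hC.1.2.1 huv (hOC hvu)

lemma setOf_isStableComposition_eq_biUnion (Q : SimpleGraph W) :
    {C | IsStableComposition Q Finset.univ C} =
      ⋃ O ∈ {O | IsAcyclicOrientationOn Q Set.univ O}, compatibleComps O Finset.univ := by
  ext C
  simp only [Set.mem_ofPred_eq, Set.mem_iUnion, exists_prop]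
  exact ⟨fun hC => ⟨_, isAcyclicOrientationOn_compOrientation hC, hC.1, fun u _ v _ h => h.2⟩,
    fun ⟨O, hO, hC⟩ => isStableComposition_of_mem_compatibleComps hO.1 hC⟩

theorem finsum_isStableComposition (Q : SimpleGraph W) :
    ∑ᶠ C ∈ {C | IsStableComposition Q Finset.univ C}, (-1 : ℤ) ^ C.length =
      (-1) ^ Nat.card W *
        Nat.card {O : W → W → Prop // IsAcyclicOrientationOn Q Set.univ O} := by
  have hdisj : {O | IsAcyclicOrientationOn Q Set.univ O}.PairwiseDisjoint
      fun O => compatibleComps O Finset.univ := by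
    intro O hO O' hO' hne
    refine Set.disjoint_left.mpr fun C hC hC' => hne ?_
    rw [← compOrientation_eq hO.1 hC, ← compOrientation_eq hO'.1 hC']
  set A := {O : W → W → Prop | IsAcyclicOrientationOn Q Set.univ O}
  have hfin : A.Finite := Set.toFinite A
  calc ∑ᶠ C ∈ {C | IsStableComposition Q Finset.univ C}, (-1 : ℤ) ^ C.length
      = ∑ᶠ O ∈ A, ∑ᶠ C ∈ compatibleComps O Finset.univ, (-1 : ℤ) ^ C.length := by
        rw [setOf_isStableComposition_eq_biUnion,
          finsum_mem_biUnion hdisj hfin fun O _ => finite_compatibleComps O _]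
    _ = ∑ᶠ _ ∈ A, (-1 : ℤ) ^ Nat.card W := by
        refine finsum_mem_congr rfl fun O hO => ?_
        rw [finsum_compatibleComps (wellFounded_of_irrefl_transGen hO.2), Finset.card_univ,
          Nat.card_eq_fintype_card]
    _ = (-1) ^ Nat.card W * A.ncard := by
        rw [finsum_mem_eq_finite_toFinset_sum _ hfin, Finset.sum_const, nsmul_eq_mul, mul_comm,
          Set.ncard_eq_toFinset_card _ hfin]
    _ = _ := by rw [← Nat.card_coe_set_eq]; rfl

end Orientation

section Pullback
variable {V W : Type*} [Fintype V] [DecidableEq W] {f : V → W}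

def pullbackComp (f : V → W) (D : List (Finset W)) : List (Finset V) :=
  D.map fun B => Finset.univ.filter (f · ∈ B)

lemma injective_filter_mem (hf : f.Surjective) :
    Function.Injective fun B : Finset W => Finset.univ.filter (f · ∈ B) := by
  intro B B' h
  ext w
  obtain ⟨v, rfl⟩ := hf w
  simpa using Finset.ext_iff.mp h v

lemma pullbackComp_injective (hf : f.Surjective) : Function.Injective (pullbackComp f) :=
  List.map_injective_iff.mpr (injective_filter_mem hf)

lemma isComposition_pullbackComp_iff [DecidableEq V] [Fintype W] (hf : f.Surjective)
    {D : List (Finset W)} :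
    IsComposition Finset.univ (pullbackComp f D) ↔ IsComposition Finset.univ D := by
  have hne : ∀ B : Finset W, (Finset.univ.filter (f · ∈ B)).Nonempty ↔ B.Nonempty := fun B =>
    ⟨fun ⟨v, hv⟩ => ⟨f v, (Finset.mem_filter.mp hv).2⟩,
      fun ⟨w, hw⟩ => let ⟨v, hv⟩ := hf w; ⟨v, by simpa [hv] using hw⟩⟩
  have hdisj : ∀ B B' : Finset W,
      Disjoint (Finset.univ.filter (f · ∈ B)) (Finset.univ.filter (f · ∈ B')) ↔
        Disjoint B B' := by
    intro B B'
    simp only [Finset.disjoint_left, Finset.mem_filter, Finset.mem_univ, true_and]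
    exact ⟨fun h w hw hw' => let ⟨v, hv⟩ := hf w; h (hv ▸ hw) (hv ▸ hw'),
      fun h _ => @h _⟩
  simp only [IsComposition, pullbackComp, List.mem_map, forall_exists_index, and_imp,
    forall_apply_eq_imp_iff₂, hne, List.pairwise_map, hdisj, Finset.eq_univ_iff_forall,
    mem_foldr_union, exists_exists_and_eq_and, Finset.mem_filter, Finset.mem_univ, true_and]
  exact and_congr_right fun _ => and_congr_right fun _ =>
    ⟨fun h w => let ⟨v, hv⟩ := hf w; hv ▸ h v, fun h v => h (f v)⟩

lemma pullbackComp_map_image {C : List (Finset V)}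
    (hsat : ∀ B ∈ C, ∀ u v, f u = f v → u ∈ B → v ∈ B) :
    pullbackComp f (C.map (Finset.image f)) = C := by
  rw [pullbackComp, List.map_map]
  refine (List.map_congr_left fun B hB => ?_).trans (List.map_id C)
  ext v
  simp only [Function.comp_apply, Finset.mem_filter, Finset.mem_univ, true_and, Finset.mem_image,
    id_eq]
  exact ⟨fun ⟨u, hu, huv⟩ => hsat B hB u v huv hu, fun hv => ⟨v, hv, rfl⟩⟩

end Pullback

section Contraction
open SimpleGraph
variable {V : Type*} {F H : Set (Sym2 V)}

lemma mem_of_connectedComponentMk_eq {C : List (Finset V)} (hC : C.Pairwise Disjoint)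
    (hH : ∀ e ∈ H, ∃ B ∈ C, ∀ v ∈ e, v ∈ B) {B : Finset V} (hB : B ∈ C) {u v : V}
    (huv : (fromEdgeSet H).connectedComponentMk u = (fromEdgeSet H).connectedComponentMk v)
    (hu : u ∈ B) : v ∈ B := by
  rw [ConnectedComponent.eq, reachable_iff_reflTransGen] at huv
  induction huv with
  | refl => exact hu
  | tail _ hbc ih =>
    obtain ⟨B', hB', hB'e⟩ := hH _ ((fromEdgeSet_adj _).mp hbc).1
    rw [eq_of_mem_of_pairwise_disjoint hC hB hB' ih (hB'e _ (Sym2.mem_mk_left _ _))]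
    exact hB'e _ (Sym2.mem_mk_right _ _)

variable [Fintype V] [Fintype (fromEdgeSet H).ConnectedComponent]
  [DecidableEq (fromEdgeSet H).ConnectedComponent]

lemma isStableComposition_contractionGraph {D : List (Finset (fromEdgeSet H).ConnectedComponent)}
    (hD : IsComposition Finset.univ D)
    (hedges : {e | ∃ B ∈ pullbackComp (fromEdgeSet H).connectedComponentMk D,
      e ∈ edgeRestrict F ↑B} ⊆ H) :
    IsStableComposition (contractionGraph H F) Finset.univ D := by
  refine ⟨hD, fun Bl hBl _ hx _ hy ⟨hne, u, v, huvF, hu, hv⟩ => hne ?_⟩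
  subst hu hv
  have huvH : s(u, v) ∈ H := hedges ⟨_, List.mem_map_of_mem hBl, huvF, fun w hw => by
    rcases Sym2.mem_iff.mp hw with rfl | rfl <;> simpa⟩
  by_cases huv : u = v
  · rw [huv]
  · exact ConnectedComponent.connectedComponentMk_eq_of_adj
      ((fromEdgeSet_adj _).mpr ⟨huvH, huv⟩)

lemma edgeRestrict_pullbackComp_eq {G : SimpleGraph V} (hFG : F ⊆ G.edgeSet)
    (hH : IsFlatOn G Set.univ H) (hHF : H ⊆ F)
    {D : List (Finset (fromEdgeSet H).ConnectedComponent)}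
    (hD : IsStableComposition (contractionGraph H F) Finset.univ D) :
    {e | ∃ B ∈ pullbackComp (fromEdgeSet H).connectedComponentMk D,
      e ∈ edgeRestrict F ↑B} = H := by
  refine Set.Subset.antisymm ?_ fun e he => ?_
  · rintro e ⟨B, hB, heF, hends⟩
    induction e using Sym2.ind with
    | _ u v =>
    obtain ⟨Bl, hBl, rfl⟩ := List.mem_map.mp hB
    have hu := (Finset.mem_filter.mp (hends u (Sym2.mem_mk_left _ _))).2
    have hv := (Finset.mem_filter.mp (hends v (Sym2.mem_mk_right _ _))).2
    by_contra huvH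
    refine hD.2 Bl hBl _ hu _ hv ⟨fun h => huvH ?_, u, v, heF, rfl, rfl⟩
    exact hH.2.2 u v trivial trivial (hFG heF) (ConnectedComponent.eq.mp h)
  · induction e using Sym2.ind with
    | _ u v =>
    have huv : (fromEdgeSet H).connectedComponentMk u = (fromEdgeSet H).connectedComponentMk v :=
      ConnectedComponent.connectedComponentMk_eq_of_adj
        ((fromEdgeSet_adj _).mpr ⟨he, (hH.1 he).ne⟩)
    obtain ⟨Bl, hBl, hu⟩ :=
      hD.1.mem_iff.mp (Finset.mem_univ ((fromEdgeSet H).connectedComponentMk u))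
    refine ⟨_, List.mem_map_of_mem hBl, hHF he, fun w hw => ?_⟩
    rcases Sym2.mem_iff.mp hw with rfl | rfl
    · simpa using hu
    · simpa [← huv] using hu

theorem finsum_edgeRestrict_eq_finsum_isStableComposition [DecidableEq V] {G : SimpleGraph V}
    (hFG : F ⊆ G.edgeSet) (hH : IsFlatOn G Set.univ H) (hHF : H ⊆ F) :
    ∑ᶠ C ∈ {C : List (Finset V) | IsComposition Finset.univ C ∧
        {e : Sym2 V | ∃ B ∈ C, e ∈ edgeRestrict F ↑B} = H}, (-1 : ℤ) ^ C.length =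
      ∑ᶠ D ∈ {D | IsStableComposition (contractionGraph H F) Finset.univ D},
        (-1 : ℤ) ^ D.length := by
  set κ := (fromEdgeSet H).connectedComponentMk
  have hκ : κ.Surjective := Quot.mk_surjective
  refine (finsum_mem_eq_of_bijOn (pullbackComp κ)
    ⟨fun D hD => ?_, (pullbackComp_injective hκ).injOn, fun C hC => ?_⟩
    fun D _ => by rw [pullbackComp, List.length_map]).symm
  · exact ⟨(isComposition_pullbackComp_iff hκ).mpr hD.1,
      edgeRestrict_pullbackComp_eq hFG hH hHF hD⟩
  · obtain ⟨hC, hedges⟩ := hC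
    have hHC : ∀ e ∈ H, ∃ B ∈ C, ∀ v ∈ e, v ∈ B := fun e he => by
      rw [← hedges] at he
      obtain ⟨B, hB, -, hends⟩ := he
      exact ⟨B, hB, hends⟩
    have hpull : pullbackComp κ (C.map (Finset.image κ)) = C :=
      pullbackComp_map_image fun B hB _ _ huv => mem_of_connectedComponentMk_eq hC.2.1 hHC hB huv
    refine ⟨C.map (Finset.image κ), isStableComposition_contractionGraph ?_ ?_, hpull⟩
    · exact (isComposition_pullbackComp_iff hκ).mp (hpull.symm ▸ hC)
    · rw [hpull, hedges]

end Contraction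

theorem antipode_of_flats_general {V : Type*} [Fintype V] [DecidableEq V]
    (G : SimpleGraph V) (F H : Set (Sym2 V))
    (hF : IsFlatOn G Set.univ F) (hH : IsFlatOn G Set.univ H) (hHF : H ⊆ F) :
    ∑ᶠ C ∈ {C : List (Finset V) | IsComposition Finset.univ C ∧
        {e : Sym2 V | ∃ B ∈ C, e ∈ edgeRestrict F ↑B} = H},
        ((-1 : ℤ)) ^ C.length =
      (-1 : ℤ) ^ (Nat.card (SimpleGraph.fromEdgeSet H).ConnectedComponent) *
        (Nat.card {O : (SimpleGraph.fromEdgeSet H).ConnectedComponent →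
            (SimpleGraph.fromEdgeSet H).ConnectedComponent → Prop //
            IsAcyclicOrientationOn (contractionGraph H F) Set.univ O} : ℤ) := by
  classical
  rw [finsum_edgeRestrict_eq_finsum_isStableComposition hF.1 hH hHF, finsum_isStableComposition]

theorem antipode_of_flats {V : Type*} [Fintype V] [DecidableEq V] [Nonempty V]
    (G : SimpleGraph V) (F H : Set (Sym2 V))
    (hF : IsFlatOn G Set.univ F) (hH : IsFlatOn G Set.univ H) (hHF : H ⊆ F) :
    ∑ᶠ C ∈ {C : List (Finset V) | IsComposition Finset.univ C ∧
        {e : Sym2 V | ∃ B ∈ C, e ∈ edgeRestrict F ↑B} = H},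
        ((-1 : ℤ)) ^ C.length =
      (-1 : ℤ) ^ (Nat.card (SimpleGraph.fromEdgeSet H).ConnectedComponent) *
        (Nat.card {O : (SimpleGraph.fromEdgeSet H).ConnectedComponent →
            (SimpleGraph.fromEdgeSet H).ConnectedComponent → Prop //
            IsAcyclicOrientationOn (contractionGraph H F) Set.univ O} : ℤ) :=
  antipode_of_flats_general G F H hF hH hHF

end GraphSpecies
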